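/- arXiv:1509.09208 — 3 statements merged into one kernel-verified Lean document; each statement's English description precedes it below -/
import Mathlib

section
/- Fix γ > 1, ε_ρ ≥ 0 and ε_p ∈ ℝ. Let q^LF ∈ ℝ⁸ and C_L, C_R, C_D, C_U ∈ ℝ⁸ be fixed vectors, and for θ = (θ_L, θ_R, θ_D, θ_U) ∈ ℝ⁴ define q(θ) = q^LF + θ_L·C_L + θ_R·C_R + θ_D·C_D + θ_U·C_U. Let ρ(q) denote the first component of q and let p(q) = (γ−1)·( E − (m₁² + m₂² + m₃²)/(2ρ) − (B₁² + B₂² + B₃²)/2 ) for q = (ρ, m₁, m₂, m₃, E, B₁, B₂, B₃) with ρ > 0. Then the set S = { θ ∈ [0,1]⁴ : ρ(q(θ)) > ε_ρ and p(q(θ)) > ε_p } is a convex subset of ℝ⁴. -/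
set_option maxHeartbeats 1000000

lemma key2 (a b x y s t : ℝ) (ha : 0 < a) (hb : 0 < b) (hs : 0 < s) (ht : 0 < t) :
    (a*x + b*y)^2 / (2*(a*s + b*t)) ≤ a * (x^2/(2*s)) + b * (y^2/(2*t)) := by
  rw [div_le_iff₀ (by positivity)]
  have h : a * (x^2/(2*s)) + b * (y^2/(2*t)) = (a*x^2*t + b*y^2*s) / (2*s*t) := by
    field_simp
  rw [h, div_mul_eq_mul_div, le_div_iff₀ (by positivity)]
  nlinarith [sq_nonneg (x*t - y*s), mul_pos ha hb, mul_pos hs ht, sq_nonneg (a*x*t - b*y*s)]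


/-- For `γ > 1`, `ε_ρ ≥ 0` and `ε_p ∈ ℝ`, the set `S` of limiting
parameters `θ ∈ [0,1]⁴` for which the affine update
`q(θ) = q^LF + θ_L•C_L + θ_R•C_R + θ_D•C_D + θ_U•C_U` has density exceeding `ε_ρ`
and pressure exceeding `ε_p` is a convex subset of `ℝ⁴`. -/
theorem stmt_3 (γ : ℝ) (hγ : 1 < γ) (ερ : ℝ) (hερ : 0 ≤ ερ) (εp : ℝ)
    (qLF CL CR CD CU : Fin 8 → ℝ)
    (q : (Fin 4 → ℝ) → (Fin 8 → ℝ))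
    (hq : ∀ θ : Fin 4 → ℝ, q θ = qLF + θ 0 • CL + θ 1 • CR + θ 2 • CD + θ 3 • CU)
    (p : (Fin 8 → ℝ) → ℝ)
    (hp : ∀ w : Fin 8 → ℝ,
      p w = (γ - 1) * (w 4 - ((w 1) ^ 2 + (w 2) ^ 2 + (w 3) ^ 2) / (2 * w 0)
        - ((w 5) ^ 2 + (w 6) ^ 2 + (w 7) ^ 2) / 2)) :
    Convex ℝ {θ : Fin 4 → ℝ |
      (∀ i, θ i ∈ Set.Icc (0 : ℝ) 1) ∧ q θ 0 > ερ ∧ p (q θ) > εp} := by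
  intro θ₁ hθ₁ θ₂ hθ₂ a b ha hb hab
  rcases ha.eq_or_lt with ha0 | ha'
  · have hb1 : b = 1 := by linarith
    simpa [← ha0, hb1] using hθ₂
  rcases hb.eq_or_lt with hb0 | hb'
  · have ha1 : a = 1 := by linarith
    simpa [← hb0, ha1] using hθ₁
  obtain ⟨hI1, hρ1, hp1⟩ := hθ₁
  obtain ⟨hI2, hρ2, hp2⟩ := hθ₂
  set w1 := q θ₁ with hw1
  set w2 := q θ₂ with hw2
  have hW : ∀ j, q (a • θ₁ + b • θ₂) j = a * w1 j + b * w2 j := by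
    intro j
    simp only [hw1, hw2, hq, Pi.add_apply, Pi.smul_apply, smul_eq_mul]
    linear_combination qLF j * hab.symm
  have hd1 : (0:ℝ) < w1 0 := lt_of_le_of_lt hερ hρ1
  have hd2 : (0:ℝ) < w2 0 := lt_of_le_of_lt hερ hρ2
  refine ⟨fun i => ?_, ?_, ?_⟩
  · obtain ⟨h1l, h1r⟩ := hI1 i
    obtain ⟨h2l, h2r⟩ := hI2 i
    simp only [Pi.add_apply, Pi.smul_apply, smul_eq_mul]
    constructor
    · positivity
    · nlinarith
  · rw [hW]
    nlinarith
  · rw [hp, hW 0, hW 1, hW 2, hW 3, hW 4, hW 5, hW 6, hW 7]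
    have hd : (0:ℝ) < a * w1 0 + b * w2 0 := by positivity
    have hM : ((a * w1 1 + b * w2 1)^2 + (a * w1 2 + b * w2 2)^2 + (a * w1 3 + b * w2 3)^2)
        / (2 * (a * w1 0 + b * w2 0))
        ≤ a * ((w1 1 ^ 2 + w1 2 ^ 2 + w1 3 ^ 2) / (2 * w1 0))
          + b * ((w2 1 ^ 2 + w2 2 ^ 2 + w2 3 ^ 2) / (2 * w2 0)) := by
      have k1 := key2 a b (w1 1) (w2 1) (w1 0) (w2 0) ha' hb' hd1 hd2
      have k2 := key2 a b (w1 2) (w2 2) (w1 0) (w2 0) ha' hb' hd1 hd2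
      have k3 := key2 a b (w1 3) (w2 3) (w1 0) (w2 0) ha' hb' hd1 hd2
      have e1 : ((a * w1 1 + b * w2 1)^2 + (a * w1 2 + b * w2 2)^2 + (a * w1 3 + b * w2 3)^2)
          / (2 * (a * w1 0 + b * w2 0))
          = (a * w1 1 + b * w2 1)^2 / (2 * (a * w1 0 + b * w2 0))
            + (a * w1 2 + b * w2 2)^2 / (2 * (a * w1 0 + b * w2 0))
            + (a * w1 3 + b * w2 3)^2 / (2 * (a * w1 0 + b * w2 0)) := by ring
      have e2 : a * ((w1 1 ^ 2 + w1 2 ^ 2 + w1 3 ^ 2) / (2 * w1 0))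
          = a * (w1 1 ^ 2 / (2 * w1 0)) + a * (w1 2 ^ 2 / (2 * w1 0))
            + a * (w1 3 ^ 2 / (2 * w1 0)) := by ring
      have e3 : b * ((w2 1 ^ 2 + w2 2 ^ 2 + w2 3 ^ 2) / (2 * w2 0))
          = b * (w2 1 ^ 2 / (2 * w2 0)) + b * (w2 2 ^ 2 / (2 * w2 0))
            + b * (w2 3 ^ 2 / (2 * w2 0)) := by ring
      rw [e1, e2, e3]; linarith
    have hB : ((a * w1 5 + b * w2 5)^2 + (a * w1 6 + b * w2 6)^2 + (a * w1 7 + b * w2 7)^2) / 2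
        ≤ a * ((w1 5 ^ 2 + w1 6 ^ 2 + w1 7 ^ 2) / 2)
          + b * ((w2 5 ^ 2 + w2 6 ^ 2 + w2 7 ^ 2) / 2) := by
      nlinarith [mul_pos ha' hb', sq_nonneg (w1 5 - w2 5), sq_nonneg (w1 6 - w2 6),
        sq_nonneg (w1 7 - w2 7)]
    have hp1' : (γ - 1) * (w1 4 - (w1 1 ^ 2 + w1 2 ^ 2 + w1 3 ^ 2) / (2 * w1 0)
        - (w1 5 ^ 2 + w1 6 ^ 2 + w1 7 ^ 2) / 2) > εp := by rw [← hp]; exact hp1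
    have hp2' : (γ - 1) * (w2 4 - (w2 1 ^ 2 + w2 2 ^ 2 + w2 3 ^ 2) / (2 * w2 0)
        - (w2 5 ^ 2 + w2 6 ^ 2 + w2 7 ^ 2) / 2) > εp := by rw [← hp]; exact hp2
    have hγ' : (0:ℝ) < γ - 1 := by linarith
    set P1 := w1 4 - (w1 1 ^ 2 + w1 2 ^ 2 + w1 3 ^ 2) / (2 * w1 0)
        - (w1 5 ^ 2 + w1 6 ^ 2 + w1 7 ^ 2) / 2 with hP1
    set P2 := w2 4 - (w2 1 ^ 2 + w2 2 ^ 2 + w2 3 ^ 2) / (2 * w2 0)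
        - (w2 5 ^ 2 + w2 6 ^ 2 + w2 7 ^ 2) / 2 with hP2
    have hPc : (a * w1 4 + b * w2 4)
        - ((a * w1 1 + b * w2 1)^2 + (a * w1 2 + b * w2 2)^2 + (a * w1 3 + b * w2 3)^2)
          / (2 * (a * w1 0 + b * w2 0))
        - ((a * w1 5 + b * w2 5)^2 + (a * w1 6 + b * w2 6)^2 + (a * w1 7 + b * w2 7)^2) / 2
        ≥ a * P1 + b * P2 := by
      rw [hP1, hP2]; linarith
    calc εp = a * εp + b * εp := by linear_combination (-εp) * hab
      _ < a * ((γ - 1) * P1) + b * ((γ - 1) * P2) := by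
          have := mul_lt_mul_of_pos_left hp1' ha'
          have := mul_lt_mul_of_pos_left hp2' hb'
          linarith
      _ = (γ - 1) * (a * P1 + b * P2) := by ring
      _ ≤ _ := mul_le_mul_of_nonneg_left (by linarith [hPc]) (le_of_lt hγ')
end

section
/- Let ε > 0, ε_ρ ∈ ℝ, and let ρ^LF ∈ ℝ satisfy ρ^LF > ε_ρ. Let c_L, c_R, c_D, c_U ∈ ℝ be four real numbers and set s = Σ_{I : c_I < 0} |c_I|, the sum over those indices I ∈ {L,R,D,U} with c_I < 0. For each I ∈ {L,R,D,U} define Λ_I = min{ 1, (ρ^LF − ε_ρ)/(ε + s) } if c_I < 0, and Λ_I = 1 if c_I ≥ 0. Then for every θ = (θ_L, θ_R, θ_D, θ_U) with 0 ≤ θ_I ≤ Λ_I for all I, one has ρ^LF + c_L·θ_L + c_R·θ_R + c_D·θ_D + c_U·θ_U > ε_ρ. -/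
/-- The box `∏_I [0, Λ_I]` produced by the density part of the
positivity-preserving limiter consists of parameters for which the limited
density `ρ^LF + Σ_I c_I θ_I` stays above the threshold `ε_ρ`. -/
theorem stmt_4 (ε ερ ρLF : ℝ) (hε : 0 < ε) (hρ : ρLF > ερ)
    (c : Fin 4 → ℝ) (s : ℝ)
    (hs : s = ∑ i ∈ Finset.univ.filter (fun i => c i < 0), |c i|)
    (Λ : Fin 4 → ℝ)
    (hΛ : ∀ i, Λ i = if c i < 0 then min 1 ((ρLF - ερ) / (ε + s)) else 1)
    (θ : Fin 4 → ℝ) (hθ : ∀ i, 0 ≤ θ i ∧ θ i ≤ Λ i) :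
    ρLF + c 0 * θ 0 + c 1 * θ 1 + c 2 * θ 2 + c 3 * θ 3 > ερ := by
  have hs' : s = (if c 0 < 0 then |c 0| else 0) + (if c 1 < 0 then |c 1| else 0)
      + (if c 2 < 0 then |c 2| else 0) + (if c 3 < 0 then |c 3| else 0) := by
    rw [hs, Finset.sum_filter, Fin.sum_univ_four]
  have hsnn : 0 ≤ s := by
    rw [hs']
    have h : ∀ x : ℝ, 0 ≤ (if x < 0 then |x| else 0) := by
      intro x; split
      · exact abs_nonneg x
      · exact le_refl 0
    have h0 := h (c 0); have h1 := h (c 1); have h2 := h (c 2); have h3 := h (c 3)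
    linarith
  have hεs : 0 < ε + s := by linarith
  set M := min 1 ((ρLF - ερ) / (ε + s)) with hM
  have hM0 : 0 ≤ M := le_min zero_le_one (div_nonneg (by linarith) hεs.le)
  have hMle : M ≤ (ρLF - ερ) / (ε + s) := min_le_right _ _
  have key : ∀ i, -((if c i < 0 then |c i| else 0) * M) ≤ c i * θ i := by
    intro i
    obtain ⟨h0, h1⟩ := hθ i
    by_cases h : c i < 0
    · have hΛi : Λ i = M := by rw [hΛ i, if_pos h]
      rw [if_pos h, abs_of_neg h]
      have : c i * M ≤ c i * θ i := mul_le_mul_of_nonpos_left (hΛi ▸ h1) h.le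
      linarith
    · rw [if_neg h]
      push_neg at h
      nlinarith
  have hsM : s * M < ρLF - ερ := by
    have h1 : s * M ≤ s * ((ρLF - ερ) / (ε + s)) :=
      mul_le_mul_of_nonneg_left hMle hsnn
    have h2 : s / (ε + s) < 1 := (div_lt_one hεs).2 (by linarith)
    have h3 : s * ((ρLF - ερ) / (ε + s)) = (s / (ε + s)) * (ρLF - ερ) := by ring
    nlinarith
  have e : s * M = (if c 0 < 0 then |c 0| else 0) * M + (if c 1 < 0 then |c 1| else 0) * M
      + (if c 2 < 0 then |c 2| else 0) * M + (if c 3 < 0 then |c 3| else 0) * M := by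
    rw [hs']; ring
  have k0 := key 0; have k1 := key 1; have k2 := key 2; have k3 := key 3
  linarith
end

section
/- Let u = (u₁, u₂, u₃) ∈ ℝ³ and n = (n₁, n₂, n₃) ∈ ℝ³ be nonzero vectors with u·n = u₁n₁ + u₂n₂ + u₃n₃ = 0, and let N^x, N^y, N^z be the 3×3 real matrices N^x = [[0, −u₂, −u₃], [0, u₁, 0], [0, 0, u₁]], N^y = [[u₂, 0, 0], [−u₁, 0, −u₃], [0, 0, u₂]], N^z = [[u₃, 0, 0], [0, u₃, 0], [−u₁, −u₂, 0]]. Then the matrix M = n₁·N^x + n₂·N^y + n₃·N^z satisfies M ≠ 0 and M² = 0; consequently there is no invertible 3×3 real matrix P such that P⁻¹ M P is a diagonal matrix. Hence the quasilinear system for the magnetic potential is only weakly hyperbolic. -/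
open Matrix

/-- For nonzero `u, n ∈ ℝ³` with `u·n = 0`, the matrix
`M = n₁N^x + n₂N^y + n₃N^z` is nonzero and nilpotent (`M² = 0`); consequently
no invertible matrix `P` makes `P⁻¹ M P` diagonal.  Hence the quasilinear
system for the magnetic potential is only weakly hyperbolic. -/
theorem stmt_6 (u n : Fin 3 → ℝ) (hu : u ≠ 0) (hn : n ≠ 0)
    (hperp : u 0 * n 0 + u 1 * n 1 + u 2 * n 2 = 0)
    (Nx Ny Nz M : Matrix (Fin 3) (Fin 3) ℝ)
    (hNx : Nx = !![0, -u 1, -u 2; 0, u 0, 0; 0, 0, u 0])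
    (hNy : Ny = !![u 1, 0, 0; -u 0, 0, -u 2; 0, 0, u 1])
    (hNz : Nz = !![u 2, 0, 0; 0, u 2, 0; -u 0, -u 1, 0])
    (hM : M = n 0 • Nx + n 1 • Ny + n 2 • Nz) :
    M ≠ 0 ∧ M ^ 2 = 0 ∧
    ¬ ∃ P : Matrix (Fin 3) (Fin 3) ℝ, IsUnit P ∧ (P⁻¹ * M * P).IsDiag := by
  subst hNx hNy hNz hM
  have hMent : ∀ i j, (n 0 • !![0, -u 1, -u 2; 0, u 0, 0; 0, 0, u 0] +
      n 1 • !![u 1, 0, 0; -u 0, 0, -u 2; 0, 0, u 1] +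
      n 2 • !![u 2, 0, 0; 0, u 2, 0; -u 0, -u 1, 0]) i j = -(n i * u j) := by
    intro i j
    fin_cases i <;> fin_cases j <;>
      simp [Matrix.add_apply, Matrix.smul_apply, Matrix.vecHead, Matrix.vecTail] <;> linarith
  set M := n 0 • !![0, -u 1, -u 2; 0, u 0, 0; 0, 0, u 0] +
      n 1 • !![u 1, 0, 0; -u 0, 0, -u 2; 0, 0, u 1] +
      n 2 • !![u 2, 0, 0; 0, u 2, 0; -u 0, -u 1, 0] with hMdef
  obtain ⟨i, hi⟩ := Function.ne_iff.mp hn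
  obtain ⟨j, hj⟩ := Function.ne_iff.mp hu
  have hi' : n i ≠ 0 := hi
  have hj' : u j ≠ 0 := hj
  have hMne : M ≠ 0 := by
    intro h
    have := hMent i j
    rw [h] at this
    simp only [Matrix.zero_apply] at this
    have : n i * u j = 0 := by linarith
    rcases mul_eq_zero.mp this with h1 | h1
    · exact hi' h1
    · exact hj' h1
  have hM2 : M ^ 2 = 0 := by
    ext a b
    rw [pow_two]
    simp only [Matrix.mul_apply, Fin.sum_univ_three, hMent, Matrix.zero_apply]
    linear_combination (n a * u b) * hperp
  refine ⟨hMne, hM2, ?_⟩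
  rintro ⟨P, hP, hD⟩
  have hPd : IsUnit P.det := (Matrix.isUnit_iff_isUnit_det P).mp hP
  have h1 : P * P⁻¹ = 1 := Matrix.mul_nonsing_inv P hPd
  set D := P⁻¹ * M * P with hDdef
  have hD2 : D * D = 0 := by
    have : D * D = P⁻¹ * (M * (P * P⁻¹) * M) * P := by
      rw [hDdef]; noncomm_ring
    rw [this, h1, Matrix.mul_one, ← pow_two, hM2]
    simp
  have hDzero : D = 0 := by
    ext a b
    by_cases hab : a = b
    · subst hab
      have key : (D * D) a a = D a a * D a a := by
        rw [Matrix.mul_apply, Finset.sum_eq_single a]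
        · intro k _ hk
          rw [hD (Ne.symm hk), zero_mul]
        · intro h; exact absurd (Finset.mem_univ a) h
      rw [hD2, Matrix.zero_apply] at key
      exact (mul_self_eq_zero.mp key.symm)
    · exact hD hab
  have hMzero : M = 0 := by
    have hc : P * D * P⁻¹ = M := by
      rw [hDdef]
      calc P * (P⁻¹ * M * P) * P⁻¹ = (P * P⁻¹) * M * (P * P⁻¹) := by noncomm_ring
        _ = M := by rw [h1]; simp
    rw [hDzero] at hc
    simpa using hc.symm
  exact hMne hMzero
end
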